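/- arXiv:2003.02875 — 6 statements merged into one kernel-verified Lean document; each statement's English description precedes it below -/
import Mathlib

section
/- Suppose v : (0,∞) → ℝ is C² and satisfies (v'(s)² - 1)·v''(s) ≥ e^{4v(s)}, v'(s) ≤ -β-1 for all s > 0 where β ≥ 0, v''(s) > 0, lim_{s→∞} v'(s) = -(β+1), and lim_{s→∞} e^{4v(s)} = 0. Then for all s > 0, (v'(s)² - 1)² - e^{4v(s)} ≥ β²(β+2)². -/
/-!
Along a solution, `F = (v'² - 1)² - e^{4v}` has derivative `4 v' ((v'² - 1) v'' - e^{4v})`,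
which is `≤ 0` because `v' < 0` and `(v'² - 1) v'' ≥ e^{4v}`. So `F` is nonincreasing on `(0, ∞)`
and dominates its limit at infinity, `((β + 1)² - 1)² - 0 = β²(β + 2)²`.
-/

open Filter Set Topology

theorem hasDerivAt_sq_sub_one_sq_sub_exp {v w : ℝ → ℝ} {w' x : ℝ}
    (hv : HasDerivAt v (w x) x) (hw : HasDerivAt w w' x) :
    HasDerivAt (fun t => (w t ^ 2 - 1) ^ 2 - Real.exp (4 * v t))
      (4 * w x * ((w x ^ 2 - 1) * w' - Real.exp (4 * v x))) x := by
  refine ((((hw.pow 2).sub_const 1).pow 2).sub ((hv.const_mul 4).exp)).congr_deriv ?_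
  push_cast [Pi.pow_apply]
  ring

theorem AntitoneOn.le_of_tendsto_atTop_of_mem_Ioi {α β : Type*} [TopologicalSpace α] [Preorder α]
    [OrderClosedTopology α] [Preorder β] [(atTop : Filter β).NeBot] {f : β → α} {a : β} {L : α}
    (hf : AntitoneOn f (Ioi a)) (hL : Tendsto f atTop (𝓝 L)) {s : β} (hs : s ∈ Ioi a) :
    L ≤ f s :=
  le_of_tendsto hL <| (eventually_ge_atTop s).mono fun _ hst => hf hs (lt_of_lt_of_le hs hst) hst

theorem rotational_penrose_first_integral_bound_general (v v' v'' : ℝ → ℝ) (β : ℝ) (hβ : 0 ≤ β)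
    (hv : ∀ s ∈ Set.Ioi (0:ℝ), HasDerivAt v (v' s) s)
    (hv' : ∀ s ∈ Set.Ioi (0:ℝ), HasDerivAt v' (v'' s) s)
    (hineq : ∀ s ∈ Set.Ioi (0:ℝ), Real.exp (4 * v s) ≤ ((v' s) ^ 2 - 1) * v'' s)
    (hv'le : ∀ s ∈ Set.Ioi (0:ℝ), v' s ≤ -β - 1)
    (hlim : Filter.Tendsto v' Filter.atTop (nhds (-(β + 1))))
    (hlim2 : Filter.Tendsto (fun s => Real.exp (4 * v s)) Filter.atTop (nhds 0)) :
    ∀ s ∈ Set.Ioi (0:ℝ),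
      β ^ 2 * (β + 2) ^ 2 ≤ ((v' s) ^ 2 - 1) ^ 2 - Real.exp (4 * v s) := by
  intro s hs
  have hF t (ht : t ∈ Ioi (0 : ℝ)) := hasDerivAt_sq_sub_one_sq_sub_exp (hv t ht) (hv' t ht)
  have hanti : AntitoneOn (fun t => (v' t ^ 2 - 1) ^ 2 - Real.exp (4 * v t)) (Ioi 0) := by
    refine antitoneOn_of_hasDerivWithinAt_nonpos (convex_Ioi 0)
      (f' := fun t => 4 * v' t * ((v' t ^ 2 - 1) * v'' t - Real.exp (4 * v t)))
      (fun t ht => (hF t ht).continuousAt.continuousWithinAt) ?_ ?_ <;> rw [interior_Ioi]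
    · exact fun t ht => (hF t ht).hasDerivWithinAt
    · exact fun t ht => mul_nonpos_of_nonpos_of_nonneg (by linarith [hv'le t ht])
        (sub_nonneg.2 (hineq t ht))
  have hlimF := (((hlim.pow 2).sub_const 1).pow 2).sub hlim2
  calc β ^ 2 * (β + 2) ^ 2 = ((-(β + 1)) ^ 2 - 1) ^ 2 - 0 := by ring
    _ ≤ _ := hanti.le_of_tendsto_atTop_of_mem_Ioi hlimF hs

/-- If `v` is `C²` on `(0,∞)` with `(v'² - 1) v'' ≥ e^{4v}`, `v' ≤ -β - 1` (`β ≥ 0`),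
`v'' > 0`, `v'(s) → -(β+1)` and `e^{4v(s)} → 0` as `s → ∞`, then for all `s > 0`,
`(v'² - 1)² - e^{4v} ≥ β²(β+2)²`. -/
theorem rotational_penrose_first_integral_bound (v v' v'' : ℝ → ℝ) (β : ℝ) (hβ : 0 ≤ β)
    (hv : ∀ s ∈ Set.Ioi (0:ℝ), HasDerivAt v (v' s) s)
    (hv' : ∀ s ∈ Set.Ioi (0:ℝ), HasDerivAt v' (v'' s) s)
    (hineq : ∀ s ∈ Set.Ioi (0:ℝ), Real.exp (4 * v s) ≤ ((v' s) ^ 2 - 1) * v'' s)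
    (hv'le : ∀ s ∈ Set.Ioi (0:ℝ), v' s ≤ -β - 1)
    (hconv : ∀ s ∈ Set.Ioi (0:ℝ), 0 < v'' s)
    (hlim : Filter.Tendsto v' Filter.atTop (nhds (-(β + 1))))
    (hlim2 : Filter.Tendsto (fun s => Real.exp (4 * v s)) Filter.atTop (nhds 0)) :
    ∀ s ∈ Set.Ioi (0:ℝ),
      β ^ 2 * (β + 2) ^ 2 ≤ ((v' s) ^ 2 - 1) ^ 2 - Real.exp (4 * v s) :=
  rotational_penrose_first_integral_bound_general v v' v'' β hβ hv hv' hineq hv'le hlim hlim2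
end

section
/- Let v(s) = -log(sinh s) + f·s⁴ + o(s⁴) as s → 0⁺, where f is a real constant, with v'(s) = -coth(s) + 4f s³ + o(s³). Then lim_{s→0⁺} (1/20)·[(v'(s)² - 1)² - e^{4v(s)}] = -f. -/
open Filter Topology Asymptotics Real

/-!
Write `S = sinh s`, `C = cosh s`, `w = v' + C/S = 4 f s³ + o(s³)` and
`q = 4 v + 4 log S = 4 f s⁴ + o(s⁴)`. Since `C² - S² = 1`, we get `v'² - 1 = 1/S² - 2 C w/S + w²`,
while `e^{4v} = e^q / S⁴`. After multiplying through by `(S/s)⁴ → 1`, the mass is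
`-(e^q - 1)/s⁴ - 4 C w/s³ + o(1) → -4f - 16f = -20f`.
-/

theorem tendsto_sinh_div_self_nhdsNE_zero :
    Tendsto (fun s => sinh s / s) (𝓝[≠] 0) (𝓝 1) := by
  have h := hasDerivAt_iff_tendsto_slope.mp (hasDerivAt_sinh 0)
  rw [cosh_zero] at h
  refine h.congr fun s => ?_
  simp [slope_def_field]

theorem tendsto_self_div_sinh_nhdsNE_zero :
    Tendsto (fun s => s / sinh s) (𝓝[≠] 0) (𝓝 1) := by
  simpa using tendsto_sinh_div_self_nhdsNE_zero.inv₀ one_ne_zero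

theorem tendsto_div_of_isLittleO_sub_mul {α : Type*} {l : Filter α} {u g : α → ℝ} {c : ℝ}
    (h : (fun t => u t - c * g t) =o[l] g) (hg : ∀ᶠ t in l, g t ≠ 0) :
    Tendsto (fun t => u t / g t) l (𝓝 c) := by
  have h' := h.tendsto_div_nhds_zero.add_const c
  rw [zero_add] at h'
  refine h'.congr' ?_
  filter_upwards [hg] with t ht
  field_simp
  ring

/-- `e^q - 1` may replace `q` in a limit `q / d → a` with `d → 0`, because `e^q - 1 - q = O(q²)`. -/
theorem tendsto_exp_sub_one_div {α : Type*} {l : Filter α} {q d : α → ℝ} {a : ℝ}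
    (hq : Tendsto (fun t => q t / d t) l (𝓝 a)) (hd : Tendsto d l (𝓝 0))
    (hd0 : ∀ᶠ t in l, d t ≠ 0) :
    Tendsto (fun t => (exp (q t) - 1) / d t) l (𝓝 a) := by
  have hq0 : Tendsto q l (𝓝 0) := by
    have h := hq.mul hd
    rw [mul_zero] at h
    refine h.congr' ?_
    filter_upwards [hd0] with t ht
    field_simp
  have hsq : Tendsto (fun t => (q t / d t) ^ 2 * |d t|) l (𝓝 0) := by
    simpa using (hq.pow 2).mul hd.abs
  have hrem : Tendsto (fun t => (exp (q t) - 1 - q t) / d t) l (𝓝 0) := by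
    refine squeeze_zero_norm' ?_ hsq
    filter_upwards [hd0, hq0.eventually (eventually_abs_sub_lt 0 one_pos)] with t ht hqt
    rw [sub_zero] at hqt
    rw [norm_eq_abs, abs_div, div_le_iff₀ (abs_pos.mpr ht)]
    calc |exp (q t) - 1 - q t| ≤ q t ^ 2 := abs_exp_sub_one_sub_id_le hqt.le
      _ = (q t / d t) ^ 2 * |d t| * |d t| := by
        rw [mul_assoc, abs_mul_abs_self]
        field_simp
  simpa [sub_div] using hrem.add hq

theorem mass_expansion (s S C w e : ℝ) (hs : s ≠ 0) (hS : S ≠ 0) (hCS : C ^ 2 - S ^ 2 = 1) :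
    ((w - C / S) ^ 2 - 1) ^ 2 - e / S ^ 4 =
      -((s / S) ^ 4 * ((e - 1) / s ^ 4)) - 4 * C * (s / S) ^ 3 * (w / s ^ 3)
        + (2 * (w / s ^ 3) ^ 2 * s ^ 4 * (s / S) ^ 2
          + (s ^ 2 * (-(2 * C * (s / S) * (w / s ^ 3)) + (w / s ^ 3) ^ 2 * s ^ 4)) ^ 2) := by
  field_simp
  linear_combination (2 * (w ^ 2 * S ^ 2 - 2 * w * S * C) + C ^ 2 - S ^ 2 + 1) * hCS

theorem tendsto_mass {α : Type*} {l : Filter α} {s S C w e : α → ℝ} {a b : ℝ}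
    (hs : Tendsto s l (𝓝 0)) (hr : Tendsto (fun t => s t / S t) l (𝓝 1))
    (hC : Tendsto C l (𝓝 1)) (hw : Tendsto (fun t => w t / s t ^ 3) l (𝓝 a))
    (he : Tendsto (fun t => (e t - 1) / s t ^ 4) l (𝓝 b))
    (hne : ∀ᶠ t in l, s t ≠ 0 ∧ S t ≠ 0 ∧ C t ^ 2 - S t ^ 2 = 1) :
    Tendsto (fun t => ((w t - C t / S t) ^ 2 - 1) ^ 2 - e t / S t ^ 4) l (𝓝 (-b - 4 * a)) := by
  have hlead : Tendsto (fun t => -((s t / S t) ^ 4 * ((e t - 1) / s t ^ 4))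
      - 4 * C t * (s t / S t) ^ 3 * (w t / s t ^ 3)) l (𝓝 (-b - 4 * a)) := by
    simpa using ((hr.pow 4).mul he).neg.sub (((hC.const_mul 4).mul (hr.pow 3)).mul hw)
  have hsmall : Tendsto (fun t => 2 * (w t / s t ^ 3) ^ 2 * s t ^ 4 * (s t / S t) ^ 2
      + (s t ^ 2 * (-(2 * C t * (s t / S t) * (w t / s t ^ 3))
        + (w t / s t ^ 3) ^ 2 * s t ^ 4)) ^ 2) l (𝓝 0) := by
    simpa using ((((hw.pow 2).const_mul 2).mul (hs.pow 4)).mul (hr.pow 2)).add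
      (((hs.pow 2).mul ((((hC.const_mul 2).mul hr).mul hw).neg.add
        ((hw.pow 2).mul (hs.pow 4)))).pow 2)
  have h := hlead.add hsmall
  rw [add_zero] at h
  refine h.congr' ?_
  filter_upwards [hne] with t ⟨hst, hSt, hCSt⟩
  exact (mass_expansion _ _ _ _ _ hst hSt hCSt).symm

/-- If `v(s) = -log(sinh s) + f s⁴ + o(s⁴)` as `s → 0⁺` with
`v'(s) = -coth s + 4 f s³ + o(s³)`, then
`(1/20)[(v'² - 1)² - e^{4v}] → -f` as `s → 0⁺`. -/
theorem quasi_local_mass_limit_at_end (v v' : ℝ → ℝ) (f : ℝ)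
    (hv : (fun s => v s - (-Real.log (Real.sinh s) + f * s ^ 4))
        =o[𝓝[>] (0:ℝ)] fun s => s ^ 4)
    (hv' : (fun s => v' s - (-(Real.cosh s / Real.sinh s) + 4 * f * s ^ 3))
        =o[𝓝[>] (0:ℝ)] fun s => s ^ 3) :
    Tendsto (fun s => (1/20) * (((v' s) ^ 2 - 1) ^ 2 - Real.exp (4 * v s)))
      (𝓝[>] (0:ℝ)) (𝓝 (-f)) := by
  have hpos : ∀ᶠ s in 𝓝[>] (0 : ℝ), 0 < s := self_mem_nhdsWithin
  have hs : Tendsto (fun s : ℝ => s) (𝓝[>] 0) (𝓝 0) := nhdsWithin_le_nhds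
  have hw : Tendsto (fun s => (v' s + cosh s / sinh s) / s ^ 3) (𝓝[>] 0) (𝓝 (4 * f)) :=
    tendsto_div_of_isLittleO_sub_mul (hv'.congr_left fun s => by ring)
      (hpos.mono fun s hs => by positivity)
  have hq : Tendsto (fun s => (4 * v s + 4 * log (sinh s)) / s ^ 4) (𝓝[>] 0) (𝓝 (4 * f)) :=
    tendsto_div_of_isLittleO_sub_mul ((hv.const_mul_left 4).congr_left fun s => by ring)
      (hpos.mono fun s hs => by positivity)
  have he := tendsto_exp_sub_one_div hq (by simpa using hs.pow 4)
    (hpos.mono fun s hs => by positivity)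
  have hC : Tendsto cosh (𝓝[>] 0) (𝓝 1) := by
    simpa using (continuous_cosh.tendsto 0).mono_left nhdsWithin_le_nhds
  have hr := tendsto_self_div_sinh_nhdsNE_zero.mono_left
    (nhdsWithin_mono _ fun s (hs : 0 < s) => hs.ne')
  have hmass := (tendsto_mass hs hr hC hw he (hpos.mono fun s hs =>
    ⟨hs.ne', (sinh_pos_iff.mpr hs).ne', cosh_sq_sub_sinh_sq s⟩)).const_mul (1 / 20)
  rw [show (1 / 20 : ℝ) * (-(4 * f) - 4 * (4 * f)) = -f by ring] at hmass
  refine hmass.congr' ?_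
  filter_upwards [hpos] with s hs
  have hS : 0 < sinh s := sinh_pos_iff.mpr hs
  have hexp : exp (4 * v s + 4 * log (sinh s)) / sinh s ^ 4 = exp (4 * v s) := by
    rw [exp_add, show (4 : ℝ) * log (sinh s) = (4 : ℕ) * log (sinh s) by norm_num, exp_nat_mul,
      exp_log hS, mul_div_assoc, div_self (by positivity), mul_one]
  rw [hexp, add_sub_cancel_right]
end

section
/- Let A be a real symmetric 4×4 matrix with principal 3×3 submatrix Ã and lower-right entry a. If σ₂(A) > 0 and σ₁(Ã) ≤ 0, then σ₂(A) ≤ σ₁(Ã)·(σ₁(Ã)/3 + a), and in particular σ₂(A) ≤ |σ₁(Ã)|·|σ₁(Ã)/3 + a|. -/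
/-- First elementary symmetric polynomial of eigenvalues: the trace. -/
noncomputable def sig1 {n : Type*} [Fintype n] (M : Matrix n n ℝ) : ℝ := M.trace

/-- Second elementary symmetric polynomial of eigenvalues:
`σ₂(M) = ((tr M)² - tr(M²))/2`. -/
noncomputable def sig2 {n : Type*} [Fintype n] (M : Matrix n n ℝ) : ℝ :=
  (M.trace ^ 2 - (M * M).trace) / 2

/-- For a symmetric 4×4 matrix `A` with principal 3×3 block `Ã` and lower-right entry `a`:
if `σ₂(A) > 0` and `σ₁(Ã) ≤ 0`, then `σ₂(A) ≤ σ₁(Ã)(σ₁(Ã)/3 + a)`, and in particular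
`σ₂(A) ≤ |σ₁(Ã)|·|σ₁(Ã)/3 + a|`. -/
theorem sigma2_level_set_estimate (Atil : Matrix (Fin 3) (Fin 3) ℝ) (hA : Atil.IsSymm)
    (b : Fin 3 → ℝ) (a : ℝ)
    (A : Matrix (Fin 3 ⊕ Unit) (Fin 3 ⊕ Unit) ℝ)
    (hblock : A = Matrix.fromBlocks Atil (Matrix.of fun i (_ : Unit) => b i)
      (Matrix.of fun (_ : Unit) j => b j) (Matrix.of fun (_ : Unit) (_ : Unit) => a))
    (hpos : 0 < sig2 A) (hneg : sig1 Atil ≤ 0) :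
    sig2 A ≤ sig1 Atil * (sig1 Atil / 3 + a) ∧
      sig2 A ≤ |sig1 Atil| * |sig1 Atil / 3 + a| := by
  have hsym : ∀ i j, Atil j i = Atil i j := fun i j => hA.apply i j
  have key : sig2 A = sig2 Atil + Atil.trace * a - (b 0 ^ 2 + b 1 ^ 2 + b 2 ^ 2) := by
    simp only [sig2, hblock, Matrix.fromBlocks_multiply]
    simp [Matrix.trace, Matrix.diag, Matrix.mul_apply, Fin.sum_univ_three,
      Fintype.sum_sum_type]
    ring
  have newton : sig2 Atil ≤ Atil.trace ^ 2 / 3 := by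
    have h01 := hsym 0 1
    have h02 := hsym 0 2
    have h12 := hsym 1 2
    simp only [sig2, Matrix.trace, Matrix.diag, Matrix.mul_apply, Fin.sum_univ_three]
    rw [h01, h02, h12]
    nlinarith [sq_nonneg (Atil 0 0 - Atil 1 1), sq_nonneg (Atil 0 0 - Atil 2 2),
      sq_nonneg (Atil 1 1 - Atil 2 2), sq_nonneg (Atil 0 1), sq_nonneg (Atil 0 2),
      sq_nonneg (Atil 1 2)]
  have h1 : sig2 A ≤ sig1 Atil * (sig1 Atil / 3 + a) := by
    simp only [sig1]
    nlinarith [sq_nonneg (b 0), sq_nonneg (b 1), sq_nonneg (b 2)]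
  refine ⟨h1, ?_⟩
  have h2 : sig1 Atil / 3 + a ≤ 0 := by nlinarith
  rw [abs_of_nonpos hneg, abs_of_nonpos h2]
  nlinarith
end

section
/- Let u, u₁ be defined near the boundary of the unit 4-disc by u(r,θ) = -log(1-r²) + log 2 + f(θ)·s⁴ + h(r,θ) and u₁(r) = -log(1-r²) + log 2 + f̄₀·(log r)⁴, where s = log(1/r), f ∈ C²(S³), f̄₀ = (1/|S³|)∫_{S³}f, and h = o(s⁴). If u(r,θ) = t = u₁(r₁) for r, r₁ near 1, then |r - r₁| = O((1-r₁)⁵) and 1-r = O(1-r₁), 1-r₁ = O(1-r). -/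
/-!
Subtracting the two level-set equations expresses `A = log (1 - r₁²) - log (1 - r²)` as
`f̄₀ s₁⁴ - f(θ) s⁴ - h`, which is `O((1 - r)⁴ + (1 - r₁)⁴)` because `f` is bounded on the compact
sphere and `s = log (1/r) ≤ 2 (1 - r)` near `r = 1`. Once `|A| ≤ log 2`, the quantities `1 - r²`
and `1 - r₁²` agree up to a factor `2`, so `1 - r` and `1 - r₁` are comparable and
`A = O((1 - r₁)⁴)`. Finally `r₁² - r² = (1 - r²)(e^A - 1) = O((1 - r₁)⁵)`, and
`|r - r₁| ≤ |r² - r₁²|` since `r + r₁ ≥ 1`.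
-/

open MeasureTheory Filter Topology

/-- The unit 3-sphere in `ℝ⁴`. -/
noncomputable def unitSphere3 : Set (EuclideanSpace ℝ (Fin 4)) := Metric.sphere 0 1

/-- The mean of `f` over the unit 3-sphere. -/
noncomputable def sphereAvg (f : EuclideanSpace ℝ (Fin 4) → ℝ) : ℝ :=
  (1 / (μH[3] unitSphere3).toReal) * ∫ θ' in unitSphere3, f θ' ∂(μH[3])

lemma abs_log_le_two_mul_one_sub {ρ : ℝ} (hρ : 1 / 2 ≤ ρ) (hρ1 : ρ ≤ 1) :
    |Real.log ρ| ≤ 2 * (1 - ρ) := by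
  have hρ0 : 0 < ρ := by linarith
  have hinv : ρ⁻¹ - 1 ≤ 2 * (1 - ρ) := by
    rw [inv_eq_one_div, div_sub_one hρ0.ne', div_le_iff₀ hρ0]
    nlinarith
  rw [abs_of_nonpos (Real.log_nonpos hρ0.le hρ1)]
  linarith [Real.one_sub_inv_le_log_of_pos hρ0]

lemma log_pow_four_le {ρ : ℝ} (hρ : 1 / 2 ≤ ρ) (hρ1 : ρ ≤ 1) :
    Real.log ρ ^ 4 ≤ 16 * (1 - ρ) ^ 4 := by
  calc Real.log ρ ^ 4 = |Real.log ρ| ^ 4 := (Even.pow_abs (by decide) _).symm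
    _ ≤ (2 * (1 - ρ)) ^ 4 :=
      pow_le_pow_left₀ (abs_nonneg _) (abs_log_le_two_mul_one_sub hρ hρ1) 4
    _ = 16 * (1 - ρ) ^ 4 := by ring

lemma le_two_mul_of_abs_log_sub_le {a b : ℝ} (ha : 0 < a) (hb : 0 < b)
    (h : |Real.log b - Real.log a| ≤ Real.log 2) : b ≤ 2 * a := by
  rw [← Real.log_le_log_iff hb (by positivity), Real.log_mul two_ne_zero ha.ne']
  linarith [(abs_le.1 h).2]

lemma abs_sub_le_two_mul_abs_log_sub {a b : ℝ} (ha : 0 < a) (hb : 0 < b)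
    (h : |Real.log b - Real.log a| ≤ 1) :
    |b - a| ≤ 2 * a * |Real.log b - Real.log a| := by
  have hb_sub : b - a = a * (Real.exp (Real.log b - Real.log a) - 1) := by
    rw [Real.exp_sub, Real.exp_log ha, Real.exp_log hb]; field_simp
  calc |b - a| = a * |Real.exp (Real.log b - Real.log a) - 1| := by
        rw [hb_sub, abs_mul, abs_of_pos ha]
    _ ≤ a * (2 * |Real.log b - Real.log a|) :=
      mul_le_mul_of_nonneg_left (Real.abs_exp_sub_one_le h) ha.le
    _ = 2 * a * |Real.log b - Real.log a| := by ring

lemma abs_sub_le_abs_sq_sub {x y : ℝ} (hxy : 1 ≤ x + y) :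
    |x - y| ≤ |x ^ 2 - y ^ 2| := by
  have : x ^ 2 - y ^ 2 = (x - y) * (x + y) := by ring
  rw [this, abs_mul, abs_of_nonneg (by linarith : 0 ≤ x + y)]
  exact le_mul_of_one_le_right (abs_nonneg _) hxy

lemma radius_comparison_of_abs_log_sub_le {K ρ ρ₁ : ℝ} (hK : 0 ≤ K)
    (hρ : ρ ∈ Set.Ico (1 / 2 : ℝ) 1) (hρ₁ : ρ₁ ∈ Set.Ico (1 / 2 : ℝ) 1)
    (hsmall : 2 * K * (1 - ρ) ≤ Real.log 2) (hsmall₁ : 2 * K * (1 - ρ₁) ≤ Real.log 2)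
    (hlog : |Real.log (1 - ρ₁ ^ 2) - Real.log (1 - ρ ^ 2)| ≤ K * ((1 - ρ) ^ 4 + (1 - ρ₁) ^ 4)) :
    |ρ - ρ₁| ≤ 2056 * K * (1 - ρ₁) ^ 5 ∧ 1 - ρ ≤ 4 * (1 - ρ₁) ∧ 1 - ρ₁ ≤ 4 * (1 - ρ) := by
  obtain ⟨hρ2, hρ1⟩ := hρ
  obtain ⟨hρ₁2, hρ₁1⟩ := hρ₁
  set A := Real.log (1 - ρ₁ ^ 2) - Real.log (1 - ρ ^ 2)
  have hδ4 : (1 - ρ) ^ 4 ≤ 1 - ρ := pow_le_of_le_one (by linarith) (by linarith) (by norm_num)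
  have hδ₁4 : (1 - ρ₁) ^ 4 ≤ 1 - ρ₁ := pow_le_of_le_one (by linarith) (by linarith) (by norm_num)
  have hA_log2 : |A| ≤ Real.log 2 := by nlinarith
  have ha : 0 < 1 - ρ ^ 2 := by nlinarith
  have ha₁ : 0 < 1 - ρ₁ ^ 2 := by nlinarith
  have hcmp : 1 - ρ₁ ^ 2 ≤ 2 * (1 - ρ ^ 2) := le_two_mul_of_abs_log_sub_le ha ha₁ hA_log2
  have hcmp' : 1 - ρ ^ 2 ≤ 2 * (1 - ρ₁ ^ 2) :=
    le_two_mul_of_abs_log_sub_le ha₁ ha (by rwa [abs_sub_comm])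
  have hδ : 1 - ρ ≤ 4 * (1 - ρ₁) := by nlinarith
  have hδ₁ : 1 - ρ₁ ≤ 4 * (1 - ρ) := by nlinarith
  refine ⟨?_, hδ, hδ₁⟩
  have hA : |A| ≤ 257 * K * (1 - ρ₁) ^ 4 := by
    have : (1 - ρ) ^ 4 ≤ (4 * (1 - ρ₁)) ^ 4 := pow_le_pow_left₀ (by linarith) hδ 4
    nlinarith
  have hA_one : |A| ≤ 1 := hA_log2.trans (by linarith [Real.log_two_lt_d9])
  calc |ρ - ρ₁| ≤ |ρ ^ 2 - ρ₁ ^ 2| := abs_sub_le_abs_sq_sub (by linarith)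
    _ = |(1 - ρ₁ ^ 2) - (1 - ρ ^ 2)| := by ring_nf
    _ ≤ 2 * (1 - ρ ^ 2) * |A| := abs_sub_le_two_mul_abs_log_sub ha ha₁ hA_one
    _ ≤ 2 * (4 * (1 - ρ₁)) * (257 * K * (1 - ρ₁) ^ 4) := by
      gcongr
      nlinarith
    _ = 2056 * K * (1 - ρ₁) ^ 5 := by ring

lemma abs_log_sub_le_of_level_eq {M a b c ρ ρ₁ t : ℝ} (ha : |a| ≤ M) (hb : |b| ≤ M)
    (hρ : ρ ∈ Set.Icc (1 / 2 : ℝ) 1) (hρ₁ : ρ₁ ∈ Set.Icc (1 / 2 : ℝ) 1)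
    (hc : |c| ≤ Real.log (1 / ρ) ^ 4)
    (hlevel : -Real.log (1 - ρ ^ 2) + Real.log 2 + a * Real.log (1 / ρ) ^ 4 + c = t)
    (hlevel₁ : -Real.log (1 - ρ₁ ^ 2) + Real.log 2 + b * Real.log ρ₁ ^ 4 = t) :
    |Real.log (1 - ρ₁ ^ 2) - Real.log (1 - ρ ^ 2)|
      ≤ 16 * (M + 1) * ((1 - ρ) ^ 4 + (1 - ρ₁) ^ 4) := by
  have hL : Real.log (1 / ρ) ^ 4 = Real.log ρ ^ 4 := by
    rw [one_div, Real.log_inv, Even.neg_pow (by decide)]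
  rw [hL] at hc hlevel
  have hdiff : Real.log (1 - ρ₁ ^ 2) - Real.log (1 - ρ ^ 2)
      = b * Real.log ρ₁ ^ 4 - a * Real.log ρ ^ 4 - c := by linarith
  have hL4 := log_pow_four_le hρ.1 hρ.2
  have hL₁4 := log_pow_four_le hρ₁.1 hρ₁.2
  have hL0 : 0 ≤ Real.log ρ ^ 4 := by positivity
  have hL₁0 : 0 ≤ Real.log ρ₁ ^ 4 := by positivity
  have hM : 0 ≤ M := (abs_nonneg a).trans ha
  calc |Real.log (1 - ρ₁ ^ 2) - Real.log (1 - ρ ^ 2)|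
      ≤ |b * Real.log ρ₁ ^ 4| + |a * Real.log ρ ^ 4| + |c| := by
        rw [hdiff]
        exact (abs_sub _ _).trans (by gcongr; exact abs_sub _ _)
    _ = |b| * Real.log ρ₁ ^ 4 + |a| * Real.log ρ ^ 4 + |c| := by
        rw [abs_mul, abs_mul, abs_of_nonneg hL0, abs_of_nonneg hL₁0]
    _ ≤ M * Real.log ρ₁ ^ 4 + (M + 1) * Real.log ρ ^ 4 := by nlinarith
    _ ≤ 16 * (M + 1) * ((1 - ρ) ^ 4 + (1 - ρ₁) ^ 4) := by nlinarith

/-- Comparison of level-set radii: if `u(r,θ) = -log(1-r²) + log 2 + f(θ) s⁴ + h(r,θ)`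
(`s = log(1/r)`, `f ∈ C²`, `h = o(s⁴)` uniformly on `S³`) and
`u₁(r) = -log(1-r²) + log 2 + f̄₀ (log r)⁴`, and `u(r(t,θ),θ) = t = u₁(r₁(t))` with
`r(t,θ), r₁(t) → 1⁻`, then `|r - r₁| = O((1-r₁)⁵)`, `1-r = O(1-r₁)` and
`1-r₁ = O(1-r)`. -/
theorem level_set_radius_comparison
    (f : EuclideanSpace ℝ (Fin 4) → ℝ) (hf : ContDiff ℝ 2 f)
    (h : ℝ → EuclideanSpace ℝ (Fin 4) → ℝ)
    (hh : ∀ c > (0:ℝ), ∀ᶠ ρ in 𝓝[<] (1:ℝ), ∀ θ ∈ unitSphere3,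
      |h ρ θ| ≤ c * (Real.log (1/ρ)) ^ 4)
    (r : ℝ → EuclideanSpace ℝ (Fin 4) → ℝ) (r₁ : ℝ → ℝ)
    (hr₁mem : ∀ᶠ t in atTop, r₁ t ∈ Set.Ioo (0:ℝ) 1)
    (hr₁lim : Tendsto r₁ atTop (𝓝 1))
    (hrunif : ∀ c > (0:ℝ), ∀ᶠ t in atTop, ∀ θ ∈ unitSphere3,
      r t θ ∈ Set.Ioo (0:ℝ) 1 ∧ 1 - r t θ ≤ c)
    (heq : ∀ᶠ t in atTop, ∀ θ ∈ unitSphere3,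
      (-Real.log (1 - (r t θ) ^ 2) + Real.log 2
          + f θ * (Real.log (1 / r t θ)) ^ 4 + h (r t θ) θ = t)
        ∧ (-Real.log (1 - (r₁ t) ^ 2) + Real.log 2
          + sphereAvg f * (Real.log (r₁ t)) ^ 4 = t)) :
    ∃ C > (0:ℝ), ∀ᶠ t in atTop, ∀ θ ∈ unitSphere3,
      |r t θ - r₁ t| ≤ C * (1 - r₁ t) ^ 5
        ∧ 1 - r t θ ≤ C * (1 - r₁ t)
        ∧ 1 - r₁ t ≤ C * (1 - r t θ) := by
  obtain ⟨M₀, hM₀⟩ := (isCompact_sphere (0 : EuclideanSpace ℝ (Fin 4)) 1).exists_bound_of_continuousOn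
    hf.continuous.continuousOn
  set M := max M₀ |sphereAvg f|
  set K := 16 * (M + 1)
  have hK : 0 < K := by positivity
  obtain ⟨l₀, hl₀, hh_Ioo⟩ := mem_nhdsLT_iff_exists_Ioo_subset.1 (hh 1 one_pos)
  set ε := min (min (1 / 2) ((1 - l₀) / 2)) (Real.log 2 / (2 * K))
  have hε : 0 < ε := lt_min (lt_min (by norm_num) (by linarith [Set.mem_Iio.1 hl₀]))
    (by have := Real.log_pos one_lt_two; positivity)
  have hε_half : ε ≤ 1 / 2 := (min_le_left _ _).trans (min_le_left _ _)
  have hε_l₀ : ε < 1 - l₀ := (min_le_left _ _).trans_lt <|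
    (min_le_right _ _).trans_lt (by linarith [Set.mem_Iio.1 hl₀])
  have hε_K : 2 * K * ε ≤ Real.log 2 := by
    rw [← le_div_iff₀' (by positivity)]; exact min_le_right _ _
  refine ⟨2056 * K + 4, by positivity, ?_⟩
  filter_upwards [hrunif ε hε, heq, hr₁mem, hr₁lim.eventually (Ioi_mem_nhds (by linarith : 1 - ε < 1))]
    with t hr hlevel hr₁ hr₁ε θ hθ
  obtain ⟨⟨-, hr1⟩, hrε⟩ := hr θ hθ
  have hr₁ε : 1 - r₁ t ≤ ε := by linarith
  have hcoeff : |h (r t θ) θ| ≤ Real.log (1 / r t θ) ^ 4 := by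
    simpa using hh_Ioo ⟨by linarith, hr1⟩ θ hθ
  have hlog := abs_log_sub_le_of_level_eq (M := M) (le_max_of_le_left (by simpa using hM₀ θ hθ))
    (le_max_right _ _) ⟨by linarith, hr1.le⟩ ⟨by linarith, hr₁.2.le⟩ hcoeff
    (hlevel θ hθ).1 (hlevel θ hθ).2
  obtain ⟨hdist, hδ, hδ₁⟩ := radius_comparison_of_abs_log_sub_le hK.le
    ⟨by linarith, hr1⟩ ⟨by linarith, hr₁.2⟩ (by nlinarith) (by nlinarith) hlog
  have hδ₁_nonneg : 0 ≤ 1 - r₁ t := by linarith [hr₁.2]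
  refine ⟨hdist.trans ?_, hδ.trans ?_, hδ₁.trans ?_⟩
  · exact mul_le_mul_of_nonneg_right (by linarith) (pow_nonneg hδ₁_nonneg 5)
  · exact mul_le_mul_of_nonneg_right (by linarith) hδ₁_nonneg
  · exact mul_le_mul_of_nonneg_right (by linarith) (by linarith)
end

section
/- Suppose z, D : ℝ → ℝ are differentiable with z ≥ 0, D' ≥ (3/2)A' where A' ≥ 0, and suppose C' ≤ A' + (1/3)[2zA' + (2/3)z'·Φ] where Φ(t) = -∮_{L(t)}σ₁(Ã)|∇u| satisfies Φ = 2D + (1/2)z³ (i.e., D = -(1/2)∮σ₁(Ã)|∇u| - (1/4)z³). Then the function m(t) = (1/5)[(2/3)D + (4/9)Dz + (1/36)z⁴ - C] satisfies m'(t) ≥ 0. -/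
/-! Substituting the bound on `C'` into `5 m'` cancels every term containing `z'` and leaves
`5 m' ≥ (2/3 + (4/9) z) (D' - (3/2) A')`, a product of two nonnegative factors. -/

noncomputable def quasiLocalMass (z D C : ℝ → ℝ) (t : ℝ) : ℝ :=
  (1/5) * ((2/3) * D t + (4/9) * D t * z t + (1/36) * (z t) ^ 4 - C t)

theorem hasDerivAt_quasiLocalMass {z D C : ℝ → ℝ} {z' D' C' t : ℝ}
    (hz : HasDerivAt z z' t) (hD : HasDerivAt D D' t) (hC : HasDerivAt C C' t) :
    HasDerivAt (quasiLocalMass z D C)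
      ((1/5) * ((2/3) * D' + (4/9) * (D' * z t + D t * z') + (1/9) * z t ^ 3 * z' - C')) t := by
  have h := ((((hD.const_mul (2/3)).add ((hD.const_mul (4/9)).fun_mul hz)).add
    ((hz.fun_pow 4).const_mul (1/36))).sub hC).const_mul (1/5)
  refine h.congr_deriv ?_
  push_cast
  ring

theorem quasiLocalMass_deriv_nonneg {z z' D D' C' A' : ℝ} (hz : 0 ≤ z) (hD' : (3/2) * A' ≤ D')
    (hC' : C' ≤ A' + (1/3) * (2 * z * A' + (2/3) * z' * (2 * D + (1/2) * z ^ 3))) :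
    0 ≤ (1/5) * ((2/3) * D' + (4/9) * (D' * z + D * z') + (1/9) * z ^ 3 * z' - C') :=
  calc 0 ≤ (1/5) * ((2/3 + (4/9) * z) * (D' - (3/2) * A')) :=
        mul_nonneg (by norm_num) (mul_nonneg (by positivity) (sub_nonneg.2 hD'))
    _ ≤ _ := by linear_combination (1/5) * hC'

theorem quasi_local_mass_monotone_general (z z' D D' C C' A' : ℝ → ℝ)
    (hz : ∀ t, HasDerivAt z (z' t) t)
    (hD : ∀ t, HasDerivAt D (D' t) t)
    (hC : ∀ t, HasDerivAt C (C' t) t)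
    (hznn : ∀ t, 0 ≤ z t)
    (hD' : ∀ t, (3/2) * A' t ≤ D' t)
    (hC' : ∀ t, C' t ≤ A' t
      + (1/3) * (2 * z t * A' t + (2/3) * z' t * (2 * D t + (1/2) * (z t) ^ 3))) :
    ∀ t, 0 ≤ deriv (fun t =>
      (1/5) * ((2/3) * D t + (4/9) * D t * z t + (1/36) * (z t) ^ 4 - C t)) t := by
  intro t
  change 0 ≤ deriv (quasiLocalMass z D C) t
  rw [(hasDerivAt_quasiLocalMass (hz t) (hD t) (hC t)).deriv]
  exact quasiLocalMass_deriv_nonneg (hznn t) (hD' t) (hC' t)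

/-- Algebraic core of the monotonicity theorem: if `z ≥ 0`, `D' ≥ (3/2)A'` with
`A' ≥ 0`, and `C' ≤ A' + (1/3)[2zA' + (2/3)z'Φ]` where `Φ = 2D + (1/2)z³`, then
`m(t) = (1/5)[(2/3)D + (4/9)Dz + (1/36)z⁴ - C]` is nondecreasing. -/
theorem quasi_local_mass_monotone (z z' D D' C C' A' : ℝ → ℝ)
    (hz : ∀ t, HasDerivAt z (z' t) t)
    (hD : ∀ t, HasDerivAt D (D' t) t)
    (hC : ∀ t, HasDerivAt C (C' t) t)
    (hznn : ∀ t, 0 ≤ z t)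
    (hA'nn : ∀ t, 0 ≤ A' t)
    (hD' : ∀ t, (3/2) * A' t ≤ D' t)
    (hC' : ∀ t, C' t ≤ A' t
      + (1/3) * (2 * z t * A' t + (2/3) * z' t * (2 * D t + (1/2) * (z t) ^ 3))) :
    ∀ t, 0 ≤ deriv (fun t =>
      (1/5) * ((2/3) * D t + (4/9) * D t * z t + (1/36) * (z t) ^ 4 - C t)) t :=
  quasi_local_mass_monotone_general z z' D D' C C' A' hz hD hC hznn hD' hC'
end

section
/- For β ≥ 0 and k = 1 (single singular point), F(β₁) = (1/20)β₁²(β₁+2)², and if a rotationally symmetric solution satisfies -m₂ = (1/20)β²(β+2)² with equality forced by (v'²-1)v'' = e^{4v}, then (v'²-1)² - e^{4v} ≡ β²(β+2)² identically. -/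
/-- Sharp case with a single singular point: for `β ≥ 0`, the singularity contribution
`F` with `k = 1` equals `(1/20)β²(β+2)²`, and if `v` satisfies the Chang–Han–Yang ODE
`(v'² - 1)v'' = e^{4v}` on `(0,∞)` with `v'(s) → -(β+1)` and `e^{4v(s)} → 0` as
`s → ∞`, then the first integral `(v'² - 1)² - e^{4v}` is identically `β²(β+2)²`. -/
theorem sharp_case_single_singularity (β : ℝ) (hβ : 0 ≤ β)
    (v v' v'' : ℝ → ℝ)
    (hv : ∀ s ∈ Set.Ioi (0:ℝ), HasDerivAt v (v' s) s)
    (hv' : ∀ s ∈ Set.Ioi (0:ℝ), HasDerivAt v' (v'' s) s)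
    (hode : ∀ s ∈ Set.Ioi (0:ℝ), ((v' s) ^ 2 - 1) * v'' s = Real.exp (4 * v s))
    (hlim : Filter.Tendsto v' Filter.atTop (nhds (-(β + 1))))
    (hlim2 : Filter.Tendsto (fun s => Real.exp (4 * v s)) Filter.atTop (nhds 0)) :
    ((1/20) * (((β ^ 3) ^ ((1:ℝ)/3)) ^ 2 * ((β ^ 3) ^ ((1:ℝ)/3) + 2) ^ 2
          + ((8/3) * (β ^ 3) ^ ((1:ℝ)/3) + 4) * (β ^ 2 - ((β ^ 3) ^ ((1:ℝ)/3)) ^ 2))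
        = (1/20) * β ^ 2 * (β + 2) ^ 2)
      ∧ ∀ s ∈ Set.Ioi (0:ℝ),
        ((v' s) ^ 2 - 1) ^ 2 - Real.exp (4 * v s) = β ^ 2 * (β + 2) ^ 2 := by
  have hpow : (β ^ 3) ^ ((1:ℝ)/3) = β := by
    rw [← Real.rpow_natCast β 3, ← Real.rpow_mul hβ]
    norm_num
  set E : ℝ → ℝ := fun s => ((v' s) ^ 2 - 1) ^ 2 - Real.exp (4 * v s) with hE
  have hdE : ∀ s ∈ Set.Ioi (0:ℝ), HasDerivAt E 0 s := by
    intro s hs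
    have h1 : HasDerivAt (fun t => ((v' t) ^ 2 - 1) ^ 2)
        (2 * ((v' s) ^ 2 - 1) ^ 1 * (2 * (v' s) ^ 1 * v'' s)) s := by
      exact (((hv' s hs).pow 2).sub_const 1).pow 2
    have h2 : HasDerivAt (fun t => Real.exp (4 * v t))
        (Real.exp (4 * v s) * (4 * v' s)) s := by
      exact (Real.hasDerivAt_exp _).comp s ((hv s hs).const_mul 4)
    have := h1.sub h2
    have heq : 2 * ((v' s) ^ 2 - 1) ^ 1 * (2 * (v' s) ^ 1 * v'' s)
        - Real.exp (4 * v s) * (4 * v' s)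
        = 4 * v' s * (((v' s) ^ 2 - 1) * v'' s - Real.exp (4 * v s)) := by ring
    rw [heq, hode s hs, sub_self, mul_zero] at this
    exact this
  have hconst : ∀ s ∈ Set.Ioi (0:ℝ), ∀ t ∈ Set.Ioi (0:ℝ), s ≤ t → E s = E t := by
    intro s hs t ht hst
    rcases eq_or_lt_of_le hst with rfl | hlt
    · rfl
    have hcont : ContinuousOn E (Set.Icc s t) := fun x hx =>
      ((hdE x (lt_of_lt_of_le hs hx.1)).continuousAt).continuousWithinAt
    have hderiv : ∀ x ∈ Set.Ioo s t, HasDerivAt E 0 x := fun x hx =>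
      hdE x (lt_trans hs hx.1)
    obtain ⟨c, _, hc⟩ := exists_hasDerivAt_eq_slope E (fun _ => 0) hlt hcont hderiv
    have : (E t - E s) / (t - s) = 0 := hc.symm
    have ht' : t - s ≠ 0 := by linarith
    field_simp at this
    linarith
  -- limit of E at infinity
  have hlimE : Filter.Tendsto E Filter.atTop
      (nhds ((((-(β + 1)) ^ 2 - 1) ^ 2 - 0))) := by
    exact (((hlim.pow 2).sub_const 1).pow 2).sub hlim2
  have hEone : ∀ s ∈ Set.Ioi (0:ℝ), E s = E 1 := by
    intro s hs
    rcases le_total s 1 with h | h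
    · exact hconst s hs 1 (by norm_num) h
    · exact (hconst 1 (by norm_num) s hs h).symm
  have hEvent : Filter.Tendsto E Filter.atTop (nhds (E 1)) := by
    have : ∀ᶠ s in Filter.atTop, E s = E 1 := by
      filter_upwards [Filter.eventually_ge_atTop (1:ℝ)] with s hs
      exact hEone s (by simp; linarith)
    exact Filter.Tendsto.congr' (Filter.EventuallyEq.symm this) tendsto_const_nhds
  have hE1 : E 1 = ((-(β + 1)) ^ 2 - 1) ^ 2 - 0 :=
    tendsto_nhds_unique hEvent hlimE
  constructor
  · rw [hpow]; ring
  · intro s hs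
    have := hEone s hs
    rw [hE1] at this
    simpa using this.trans (by ring)
end
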